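/- For ω ∈ F_n let N(ω) be the number of a ∈ {1, …, n−1} such that b̃_{a-1} = 1 and b̃_a = 1. Then for every ε > 0, the conditional probability μ( (4/18 − ε)·n < N < (4/18 + ε)·n ∣ F_n ) tends to 1 as n → ∞. -/

import Mathlib

open MeasureTheory ProbabilityTheory Filter

/-- `μ` is the infinite product over `ℕ` of the uniform probability measure on
`{-1,0,1} ⊆ ℤ`, characterized by its values on cylinder sets.  (Taking `n = 0`
shows `μ` is a probability measure.) -/
def IsCDGProductMeasure (μ : Measure (ℕ → ℤ)) : Prop :=
  ∀ (n : ℕ) (c : ℕ → ℤ),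
    μ {ω : ℕ → ℤ | ∀ i < n, ω i = c i} =
      ∏ i ∈ Finset.range n,
        (if c i = -1 ∨ c i = 0 ∨ c i = 1 then (1 / 3 : ENNReal) else 0)

/-- `S n b = ∑_{i=0}^{n-1} 2^(n-1-i) b i`. -/
def cdgS (n : ℕ) (b : ℕ → ℤ) : ℤ := ∑ i ∈ Finset.range n, 2 ^ (n - 1 - i) * b i

/-- The standard form `b̃ a` of the sequence `b` for length `n`: the binary digit of
`S = ∑_{i<n} 2^(n-1-i) b i` in position `n-1-a`, so that (in the "first 1" case, where
`1 ≤ S ≤ 2^n − 1`) one has `S = ∑_{a<n} 2^(n-1-a) b̃ a` with each `b̃ a ∈ {0,1}`. -/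
def btilde (n : ℕ) (b : ℕ → ℤ) (a : ℕ) : ℕ := (cdgS n b).toNat / 2 ^ (n - 1 - a) % 2

/-- The "first 1" event `F_n` for length `n`: there is `j < n` with `b j = 1` and
`b k = 0` for all `k < j`. -/
def firstOne (n : ℕ) : Set (ℕ → ℤ) :=
  {b : ℕ → ℤ | ∃ j < n, b j = 1 ∧ ∀ k < j, b k = 0}

/-!
On the event that the first nonzero digit is a `1` at position `j`, the integer `S` equals
`2 ^ m + ∑_{k < m} 2 ^ k d_k` with `m = n - 1 - j` and free digits `d_k ∈ {-1, 0, 1}`. Its binary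
digits are produced, least significant first, by subtracting with a borrow, so the number `N` of
adjacent `11` pairs is an additive functional of a four-state chain (last bit, borrow). Summing
over all `3 ^ m` digit strings gives the exact identity `∑ (9 N - 2 m) ^ 2 = (18 m + 3) 3 ^ m`
(`m ≥ 2`), and Chebyshev's inequality leaves a proportion `O(1 / (ε ^ 2 n))` of strings with
`|N - 2 m / 9| ≥ ε n`. Given `F_n`, position `j` has weight `≍ 3 ^ (-j)`, so `j ≤ ε n` except on a
set of vanishing conditional probability, and then `2 m / 9 = 4 n / 18 + O(ε n)`.
-/

open Finset

namespace StandardForm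

def bit (x : ℤ) (k : ℕ) : ℕ := x.toNat / 2 ^ k % 2

def adjOnesBelow (x : ℤ) (L : ℕ) : ℕ := #{k ∈ range L | bit x k = 1 ∧ bit x (k + 1) = 1}

lemma bit_eq_zero_of_lt {x : ℤ} {k : ℕ} (hx : x < 2 ^ k) : bit x k = 0 := by
  have h2 : (0 : ℤ) < 2 ^ k := by positivity
  have : x.toNat < 2 ^ k := by zify; omega
  simp [bit, Nat.div_eq_of_lt this]

lemma adjOnesBelow_eq_of_lt {x : ℤ} {L L' : ℕ} (hx : x < 2 ^ (L + 1)) (hL : L ≤ L') :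
    adjOnesBelow x L' = adjOnesBelow x L := by
  unfold adjOnesBelow
  congr 1
  ext k
  simp only [mem_filter, mem_range]
  refine ⟨fun ⟨hk, h0, h1⟩ => ⟨?_, h0, h1⟩, fun ⟨hk, h⟩ => ⟨by omega, h⟩⟩
  by_contra hkL
  rw [bit_eq_zero_of_lt (hx.trans_le (pow_le_pow_right₀ (by norm_num) (by omega)))] at h1
  exact absurd h1 zero_ne_one

lemma toNat_bool_add_two_mul {x : ℤ} (hx : 0 ≤ x) (b : Bool) :
    ((b.toNat : ℤ) + 2 * x).toNat = b.toNat + 2 * x.toNat := by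
  cases b <;> simp <;> omega

lemma bit_bool_add_two_mul_zero {x : ℤ} (hx : 0 ≤ x) (b : Bool) :
    bit (b.toNat + 2 * x) 0 = b.toNat := by
  rw [bit, toNat_bool_add_two_mul hx, pow_zero, Nat.div_one]
  have := Bool.toNat_le b
  omega

lemma bit_bool_add_two_mul_succ {x : ℤ} (hx : 0 ≤ x) (b : Bool) (k : ℕ) :
    bit (b.toNat + 2 * x) (k + 1) = bit x k := by
  rw [bit, bit, toNat_bool_add_two_mul hx, pow_succ', ← Nat.div_div_eq_div_mul]
  have := Bool.toNat_le b
  congr 2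
  omega

lemma adjOnesBelow_bool_add_two_mul {x : ℤ} (hx : 0 ≤ x) (b : Bool) (L : ℕ) :
    adjOnesBelow (b.toNat + 2 * x) (L + 1) =
      (if b ∧ bit x 0 = 1 then 1 else 0) + adjOnesBelow x L := by
  simp only [adjOnesBelow, card_filter, sum_range_succ', bit_bool_add_two_mul_succ hx,
    bit_bool_add_two_mul_zero hx]
  cases b <;> simp [add_comm]

/-- Subtraction with borrow: `t : Fin 3` encodes the signed digit `t - 1`, and the result is
(output bit, outgoing borrow). -/
def step (borrow : Bool) (t : Fin 3) : Bool × Bool :=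
  let d : ℤ := t - 1 - borrow.toNat
  (d % 2 = 1, d < 0)

lemma step_spec (borrow : Bool) (t : Fin 3) :
    (t : ℤ) - 1 - borrow.toNat = (step borrow t).1.toNat - 2 * (step borrow t).2.toNat := by
  fin_cases t <;> cases borrow <;> decide

def tailValue {m : ℕ} (borrow : Bool) (η : Fin m → Fin 3) : ℤ :=
  2 ^ m + ∑ k : Fin m, 2 ^ (k : ℕ) * ((η k : ℤ) - 1) - borrow.toNat

lemma tailValue_succ {m : ℕ} (borrow : Bool) (η : Fin (m + 1) → Fin 3) :
    tailValue borrow η = (step borrow (η 0)).1.toNat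
      + 2 * tailValue (step borrow (η 0)).2 (Fin.tail η) := by
  simp only [tailValue, Fin.sum_univ_succ, Fin.val_zero, pow_zero, one_mul, Fin.val_succ,
    pow_succ', mul_assoc, ← mul_sum, Fin.tail]
  linear_combination step_spec borrow (η 0)

lemma tailValue_mem_Ico {m : ℕ} (borrow : Bool) (η : Fin m → Fin 3) :
    tailValue borrow η ∈ Set.Ico 0 (2 ^ (m + 1)) := by
  induction m generalizing borrow with
  | zero => cases borrow <;> simp [tailValue]
  | succ m ih =>
    obtain ⟨h0, h1⟩ := ih (step borrow (η 0)).2 (Fin.tail η)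
    rw [tailValue_succ, pow_succ]
    cases (step borrow (η 0)).1 <;> simp <;> constructor <;> linarith

/-- `prev` is the last bit output; once the digits are used up, what is left of the leading
`2 ^ m` is the single bit `!borrow`. -/
def runAdjOnes : (m : ℕ) → Bool → Bool → (Fin m → Fin 3) → ℕ
  | 0, prev, borrow, _ => (prev && !borrow).toNat
  | m + 1, prev, borrow, η =>
      (prev && (step borrow (η 0)).1).toNat
        + runAdjOnes m (step borrow (η 0)).1 (step borrow (η 0)).2 (Fin.tail η)

lemma runAdjOnes_eq {m : ℕ} (prev borrow : Bool) (η : Fin m → Fin 3) :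
    runAdjOnes m prev borrow η =
      (if prev ∧ bit (tailValue borrow η) 0 = 1 then 1 else 0)
        + adjOnesBelow (tailValue borrow η) m := by
  induction m generalizing prev borrow with
  | zero => cases prev <;> cases borrow <;> simp [runAdjOnes, tailValue, adjOnesBelow, bit]
  | succ m ih =>
    have hV := (tailValue_mem_Ico (step borrow (η 0)).2 (Fin.tail η)).1
    rw [runAdjOnes, ih, tailValue_succ, bit_bool_add_two_mul_zero hV,
      adjOnesBelow_bool_add_two_mul hV]
    cases prev <;> cases (step borrow (η 0)).1 <;> simp

lemma sum_pi_fin_succ {α M : Type*} [Fintype α] [AddCommMonoid M] {m : ℕ}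
    (f : (Fin (m + 1) → α) → M) :
    ∑ η, f η = ∑ t, ∑ η : Fin m → α, f (Fin.cons t η) := by
  rw [← (Fin.consEquiv fun _ => α).sum_comp f, Fintype.sum_prod_type]
  rfl

def moment1 (m : ℕ) (prev borrow : Bool) : ℤ :=
  ∑ η : Fin m → Fin 3, (runAdjOnes m prev borrow η : ℤ)

def moment2 (m : ℕ) (prev borrow : Bool) : ℤ :=
  ∑ η : Fin m → Fin 3, (runAdjOnes m prev borrow η : ℤ) ^ 2

lemma moment1_succ (m : ℕ) (prev borrow : Bool) :
    moment1 (m + 1) prev borrow = ∑ t, ((prev && (step borrow t).1).toNat * 3 ^ m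
      + moment1 m (step borrow t).1 (step borrow t).2) := by
  simp only [moment1, sum_pi_fin_succ, runAdjOnes, Fin.cons_zero, Fin.tail_cons, Nat.cast_add,
    sum_add_distrib, sum_const, card_univ, Fintype.card_fun, Fintype.card_fin, nsmul_eq_mul]
  push_cast
  ring_nf

lemma moment2_succ (m : ℕ) (prev borrow : Bool) :
    moment2 (m + 1) prev borrow = ∑ t, ((prev && (step borrow t).1).toNat * 3 ^ m
      + 2 * (prev && (step borrow t).1).toNat * moment1 m (step borrow t).1 (step borrow t).2
      + moment2 m (step borrow t).1 (step borrow t).2) := by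
  simp only [moment2, moment1, sum_pi_fin_succ, runAdjOnes, Fin.cons_zero, Fin.tail_cons]
  refine sum_congr rfl fun t _ => ?_
  have hsq : ∀ e : Bool, ∀ x : ℤ, ((e.toNat : ℤ) + x) ^ 2 = e.toNat + 2 * e.toNat * x + x ^ 2 := by
    intro e x; cases e <;> simp [add_sq]
  simp only [Nat.cast_add, hsq, sum_add_distrib, ← mul_sum, sum_const, card_univ,
    Fintype.card_fun, Fintype.card_fin, nsmul_eq_mul]
  push_cast
  ring

lemma moment_closed_forms {m : ℕ} (hm : 2 ≤ m) :
    (9 * moment1 m false false = (2 * m + 1) * 3 ^ m ∧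
      9 * moment1 m false true = (2 * m - 2) * 3 ^ m ∧
      9 * moment1 m true false = (2 * m + 7) * 3 ^ m ∧
      9 * moment1 m true true = (2 * m + 1) * 3 ^ m) ∧
    (81 * moment2 m false false = (4 * m ^ 2 + 22 * m + 3) * 3 ^ m ∧
      81 * moment2 m false true = (4 * m ^ 2 + 10 * m - 18) * 3 ^ m ∧
      81 * moment2 m true false = (4 * m ^ 2 + 46 * m + 81) * 3 ^ m ∧
      81 * moment2 m true true = (4 * m ^ 2 + 22 * m + 3) * 3 ^ m) := by
  induction m, hm using Nat.le_induction with
  | base =>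
    decide
  | succ m _ ih =>
    obtain ⟨⟨b1, b2, b3, b4⟩, ⟨q1, q2, q3, q4⟩⟩ := ih
    simp only [moment1_succ, moment2_succ, Fin.sum_univ_three]
    simp +decide only [step, decide_true, decide_false, Bool.and_true,
      Bool.and_false, Bool.toNat_true, Bool.toNat_false]
    push_cast [pow_succ]
    refine ⟨⟨?_, ?_, ?_, ?_⟩, ?_, ?_, ?_, ?_⟩ <;> linarith

lemma sum_sq_deviation_le (m : ℕ) :
    ∑ η : Fin m → Fin 3, (9 * (runAdjOnes m false false η : ℤ) - 2 * m) ^ 2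
      ≤ (18 * (m : ℤ) + 3) * 3 ^ m := by
  rcases lt_or_ge m 2 with hm | hm
  · interval_cases m <;> decide
  obtain ⟨⟨h1, -⟩, ⟨h2, -⟩⟩ := moment_closed_forms hm
  have expand : ∀ x : ℤ, (9 * x - 2 * m) ^ 2 = 81 * x ^ 2 - 36 * m * x + 4 * m ^ 2 := by
    intro x; ring
  simp only [expand, sum_add_distrib, sum_sub_distrib, ← mul_sum, sum_const, card_univ,
    Fintype.card_fun, Fintype.card_fin, nsmul_eq_mul]
  rw [← moment1, ← moment2]
  push_cast
  linear_combination h2 - 4 * (m : ℤ) * h1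

lemma card_deviation_le (m : ℕ) {r : ℝ} (hr : 0 ≤ r) :
    #{η : Fin m → Fin 3 | r ≤ |9 * (runAdjOnes m false false η : ℝ) - 2 * m|} * r ^ 2
      ≤ (18 * (m : ℝ) + 3) * 3 ^ m := by
  set f : (Fin m → Fin 3) → ℝ := fun η => 9 * (runAdjOnes m false false η : ℝ) - 2 * m
  have hsum : ∑ η, f η ^ 2 ≤ (18 * m + 3) * 3 ^ m := by
    have h := (Int.cast_le (R := ℝ)).2 (sum_sq_deviation_le m)
    push_cast at h
    exact h
  calc _ = #{η | r ≤ |f η|} • r ^ 2 := (nsmul_eq_mul _ _).symm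
    _ ≤ ∑ η ∈ {η | r ≤ |f η|}, f η ^ 2 :=
        card_nsmul_le_sum _ _ _ fun η hη => by
          simpa using pow_le_pow_left₀ hr (mem_filter.1 hη).2 2
    _ ≤ ∑ η, f η ^ 2 := sum_le_sum_of_subset_of_nonneg (filter_subset _ _) fun _ _ _ => sq_nonneg _
    _ ≤ _ := hsum

def adjOnes (n : ℕ) (ω : ℕ → ℤ) : ℕ :=
  #{a ∈ Ico 1 n | btilde n ω (a - 1) = 1 ∧ btilde n ω a = 1}

lemma btilde_eq_bit (n : ℕ) (ω : ℕ → ℤ) (a : ℕ) : btilde n ω a = bit (cdgS n ω) (n - 1 - a) :=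
  rfl

lemma adjOnes_eq_adjOnesBelow (n : ℕ) (ω : ℕ → ℤ) :
    adjOnes n ω = adjOnesBelow (cdgS n ω) (n - 1) := by
  rw [adjOnes, adjOnesBelow]
  refine card_nbij' (fun a => n - 1 - a) (fun k => n - 1 - k) ?_ ?_ ?_ ?_ <;>
    intro x hx <;> simp only [mem_coe, mem_filter, mem_Ico, mem_range] at hx ⊢
  · obtain ⟨⟨h1, h2⟩, hprev, hcur⟩ := hx
    rw [btilde_eq_bit, show n - 1 - (x - 1) = n - 1 - x + 1 by omega] at hprev
    exact ⟨by omega, hcur, hprev⟩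
  · obtain ⟨hx, hcur, hnext⟩ := hx
    rw [btilde_eq_bit, btilde_eq_bit, show n - 1 - (n - 1 - x - 1) = x + 1 by omega,
      show n - 1 - (n - 1 - x) = x by omega]
    exact ⟨by omega, hnext, hcur⟩
  all_goals omega

lemma cdgS_of_firstOneAt {n j : ℕ} {ω : ℕ → ℤ} (hj : j < n) (h1 : ω j = 1)
    (h0 : ∀ k < j, ω k = 0) :
    cdgS n ω = 2 ^ (n - 1 - j) + ∑ k ∈ range (n - 1 - j), 2 ^ k * ω (n - 1 - k) := by
  have hhigh : ∑ k ∈ Ico (n - 1 - j + 1) n, 2 ^ k * ω (n - 1 - k) = 0 :=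
    sum_eq_zero fun k hk => by rw [h0 _ (by simp only [mem_Ico] at hk; omega), mul_zero]
  have hreflect : cdgS n ω = ∑ k ∈ range n, 2 ^ k * ω (n - 1 - k) := by
    rw [cdgS, ← sum_range_reflect]
    exact sum_congr rfl fun k hk => by rw [show n - 1 - (n - 1 - k) = k by simp at hk; omega]
  rw [hreflect, ← sum_range_add_sum_Ico _ (by omega : n - 1 - j + 1 ≤ n), hhigh, add_zero,
    sum_range_succ, show n - 1 - (n - 1 - j) = j by omega, h1, mul_one, add_comm]

def toSeq (n : ℕ) (c : Fin n → Fin 3) : ℕ → ℤ :=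
  fun i => if h : i < n then (c ⟨i, h⟩ : ℤ) - 1 else 0

lemma toSeq_eq_iff {n : ℕ} {c c' : Fin n → Fin 3} (i : Fin n) :
    toSeq n c i = toSeq n c' i ↔ c i = c' i := by
  simp [toSeq, Fin.ext_iff]

/-- The digits of `c` after position `j`, least significant (position `n - 1`) first. -/
def tailDigits (n j : ℕ) (c : Fin n → Fin 3) : Fin (n - 1 - j) → Fin 3 :=
  fun k => c ⟨n - 1 - k, by omega⟩

lemma cdgS_toSeq {n j : ℕ} {c : Fin n → Fin 3} (hj : j < n) (h1 : toSeq n c j = 1)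
    (h0 : ∀ k < j, toSeq n c k = 0) :
    cdgS n (toSeq n c) = tailValue false (tailDigits n j c) := by
  rw [cdgS_of_firstOneAt hj h1 h0, tailValue, ← Fin.sum_univ_eq_sum_range]
  simp [toSeq, tailDigits, show ∀ k : Fin (n - 1 - j), n - 1 - (k : ℕ) < n from fun k => by omega]

lemma adjOnes_toSeq {n j : ℕ} {c : Fin n → Fin 3} (hj : j < n) (h1 : toSeq n c j = 1)
    (h0 : ∀ k < j, toSeq n c k = 0) :
    adjOnes n (toSeq n c) = runAdjOnes (n - 1 - j) false false (tailDigits n j c) := by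
  rw [runAdjOnes_eq, adjOnes_eq_adjOnesBelow, cdgS_toSeq hj h1 h0,
    adjOnesBelow_eq_of_lt (tailValue_mem_Ico _ _).2 (by omega : n - 1 - j ≤ n - 1)]
  simp

lemma tailDigits_injOn (n j : ℕ) :
    Set.InjOn (tailDigits n j) {c | toSeq n c j = 1 ∧ ∀ k < j, toSeq n c k = 0} := by
  rintro c ⟨h1, h0⟩ c' ⟨h1', h0'⟩ h
  ext i
  rw [← Fin.ext_iff, ← toSeq_eq_iff]
  rcases lt_trichotomy (i : ℕ) j with hi | hi | hi
  · rw [h0 _ hi, h0' _ hi]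
  · rw [hi, h1, h1']
  · have := congrFun h ⟨n - 1 - i, by omega⟩
    simp only [tailDigits, show n - 1 - (n - 1 - (i : ℕ)) = i by omega] at this
    exact (toSeq_eq_iff i).2 this

def IsTypical (ε : ℝ) (n N : ℕ) : Prop :=
  (4 / 18 - ε) * n < N ∧ (N : ℝ) < (4 / 18 + ε) * n

def typicalSet (n : ℕ) (ε : ℝ) : Set (ℕ → ℤ) := {ω | IsTypical ε n (adjOnes n ω)}

open scoped Classical in
noncomputable def badTails (n j : ℕ) (ε : ℝ) : Finset (Fin (n - 1 - j) → Fin 3) :=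
  {η | ¬ IsTypical ε n (runAdjOnes (n - 1 - j) false false η)}

lemma card_badTails_le {n j : ℕ} {ε : ℝ} (hε : 0 < ε) (hεn : 2 ≤ ε * n) (hj : j < n)
    (hjε : (j : ℝ) ≤ ε * n) :
    (#(badTails n j ε) : ℝ) ≤ 3 ^ (n - 1 - j) / (ε ^ 2 * n) := by
  set m := n - 1 - j
  have hm : (m : ℝ) = n - 1 - j := by
    rw [Nat.cast_sub (by omega), Nat.cast_sub (by omega), Nat.cast_one]
  have hn : (1 : ℝ) ≤ n := by exact_mod_cast (show 1 ≤ n by omega)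
  have hsub : badTails n j ε ⊆
      ({η | 6 * ε * n ≤ |9 * (runAdjOnes m false false η : ℝ) - 2 * m|} : Finset _) := by
    intro η hη
    simp only [badTails, IsTypical, mem_filter, mem_univ, true_and, not_and_or, not_lt] at hη ⊢
    rcases hη with h | h
    · exact le_abs.2 (Or.inr (by linarith))
    · exact le_abs.2 (Or.inl (by linarith))
  have hdev := card_deviation_le m (r := 6 * ε * n) (by positivity)
  have hcard : (#(badTails n j ε) : ℝ) * (6 * ε * n) ^ 2 ≤ 36 * n * 3 ^ m := by
    calc (#(badTails n j ε) : ℝ) * (6 * ε * n) ^ 2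
        ≤ #({η | 6 * ε * n ≤ |9 * (runAdjOnes m false false η : ℝ) - 2 * m|} : Finset _)
            * (6 * ε * n) ^ 2 :=
          mul_le_mul_of_nonneg_right (by exact_mod_cast card_le_card hsub) (sq_nonneg _)
      _ ≤ (18 * m + 3) * 3 ^ m := hdev
      _ ≤ 36 * n * 3 ^ m := by gcongr; linarith
  rw [le_div_iff₀ (by positivity)]
  nlinarith [show (0 : ℝ) < 36 * n by positivity]

open scoped Classical in
noncomputable def cylCount (n : ℕ) (A : Set (ℕ → ℤ)) : ℕ := #{c : Fin n → Fin 3 | toSeq n c ∈ A}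

lemma cylCount_firstOne_diff_typicalSet_le (n : ℕ) (ε : ℝ) :
    cylCount n (firstOne n \ typicalSet n ε) ≤ ∑ j ∈ range n, #(badTails n j ε) := by
  classical
  let firstAt (j : ℕ) : Finset (Fin n → Fin 3) :=
    {c | (toSeq n c j = 1 ∧ ∀ k < j, toSeq n c k = 0) ∧ toSeq n c ∉ typicalSet n ε}
  have hpiece : ∀ j ∈ range n, #(firstAt j) ≤ #(badTails n j ε) := by
    intro j hj
    refine card_le_card_of_injOn (tailDigits n j) ?_ ?_
    · intro c hc
      obtain ⟨⟨h1, h0⟩, hbad⟩ := (mem_filter.1 hc).2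
      simp only [badTails, coe_filter, mem_univ, true_and, Set.mem_ofPred_eq]
      rwa [← adjOnes_toSeq (mem_range.1 hj) h1 h0]
    · exact (tailDigits_injOn n j).mono fun c hc => (mem_filter.1 hc).2.1
  unfold cylCount
  refine (card_le_card fun c hc => ?_).trans (card_biUnion_le.trans (sum_le_sum hpiece))
  simp only [mem_filter, mem_univ, true_and] at hc
  obtain ⟨⟨j, hj, hfirst⟩, hbad⟩ := hc
  exact mem_biUnion.2 ⟨j, mem_range.2 hj, mem_filter.2 ⟨mem_univ _, hfirst, hbad⟩⟩

lemma three_pow_le_cylCount_firstOne {n : ℕ} (hn : 1 ≤ n) :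
    3 ^ (n - 1) ≤ cylCount n (firstOne n) := by
  classical
  obtain ⟨n, rfl⟩ : ∃ k, n = k + 1 := ⟨n - 1, by omega⟩
  calc 3 ^ (n + 1 - 1) = #(univ : Finset (Fin n → Fin 3)) := by simp
    _ ≤ cylCount (n + 1) (firstOne (n + 1)) := by
      unfold cylCount
      refine card_le_card_of_injOn (fun η => (Fin.cons 2 η : Fin (n + 1) → Fin 3)) (fun η _ => ?_)
        fun _ _ _ _ h => Fin.cons_right_injective _ h
      simp only [coe_filter, mem_univ, true_and, Set.mem_ofPred_eq]
      exact ⟨0, by omega, by simp [toSeq], by simp⟩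

lemma card_badTails_div_le {n j : ℕ} {ε : ℝ} (hε : 0 < ε) (hεn : 2 ≤ ε * n) (hj : j < n) :
    (#(badTails n j ε) : ℝ) / 3 ^ (n - 1)
      ≤ (1 / 3) ^ j / (ε ^ 2 * n) + if ⌊ε * n⌋₊ < j then (1 / 3) ^ j else 0 := by
  have hsplit : (3 : ℝ) ^ (n - 1) = 3 ^ (n - 1 - j) * 3 ^ j := by
    rw [← pow_add, Nat.sub_add_cancel (by omega)]
  have hn : (0 : ℝ) < n := by nlinarith
  rw [hsplit, ← div_div, div_eq_mul_one_div _ ((3 : ℝ) ^ j), ← one_div_pow]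
  split_ifs with hJ
  · have hcard : (#(badTails n j ε) : ℝ) ≤ 3 ^ (n - 1 - j) := by
      exact_mod_cast (card_le_univ _).trans (by simp)
    calc (#(badTails n j ε) : ℝ) / 3 ^ (n - 1 - j) * (1 / 3) ^ j ≤ 1 * (1 / 3) ^ j := by
          gcongr
          exact div_le_one_of_le₀ hcard (by positivity)
      _ ≤ _ := by rw [one_mul]; exact le_add_of_nonneg_left (by positivity)
  · have hjε : (j : ℝ) ≤ ε * n := (Nat.le_floor_iff (by positivity)).1 (not_lt.1 hJ)
    rw [add_zero]
    calc (#(badTails n j ε) : ℝ) / 3 ^ (n - 1 - j) * (1 / 3) ^ j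
        ≤ 3 ^ (n - 1 - j) / (ε ^ 2 * n) / 3 ^ (n - 1 - j) * (1 / 3) ^ j := by
          gcongr
          exact card_badTails_le hε hεn hj hjε
      _ = _ := by field_simp

lemma cylCount_diff_typicalSet_div_le {n : ℕ} {ε : ℝ} (hε : 0 < ε) (hεn : 2 ≤ ε * n) :
    (cylCount n (firstOne n \ typicalSet n ε) : ℝ) / cylCount n (firstOne n)
      ≤ 3 / 2 * (1 / (ε ^ 2 * n) + (1 / 3) ^ (⌊ε * n⌋₊ + 1)) := by
  have hn : 1 ≤ n := by
    rcases Nat.eq_zero_or_pos n with rfl | h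
    · norm_num at hεn
    · exact h
  set J := ⌊ε * n⌋₊
  have hgeom : ∀ k, ∑ j ∈ Ico k n, (1 / 3 : ℝ) ^ j ≤ 3 / 2 * (1 / 3) ^ k := fun k =>
    (geom_sum_Ico_le_of_lt_one (by norm_num) (by norm_num)).trans_eq (by ring)
  have htail : ∑ j ∈ range n, (if J < j then (1 / 3 : ℝ) ^ j else 0)
      ≤ ∑ j ∈ Ico (J + 1) n, (1 / 3 : ℝ) ^ j := by
    rw [← sum_filter]
    exact sum_le_sum_of_subset_of_nonneg (fun j hj => by simp at hj ⊢; omega)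
      fun _ _ _ => by positivity
  calc (cylCount n (firstOne n \ typicalSet n ε) : ℝ) / cylCount n (firstOne n)
      ≤ (cylCount n (firstOne n \ typicalSet n ε) : ℝ) / 3 ^ (n - 1) := by
        gcongr
        exact_mod_cast three_pow_le_cylCount_firstOne hn
    _ ≤ ∑ j ∈ range n, (#(badTails n j ε) : ℝ) / 3 ^ (n - 1) := by
        rw [← sum_div]
        gcongr
        exact_mod_cast cylCount_firstOne_diff_typicalSet_le n ε
    _ ≤ ∑ j ∈ range n, ((1 / 3) ^ j / (ε ^ 2 * n) + if J < j then (1 / 3) ^ j else 0) :=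
        sum_le_sum fun j hj => card_badTails_div_le hε hεn (mem_range.1 hj)
    _ ≤ 3 / 2 / (ε ^ 2 * n) + 3 / 2 * (1 / 3) ^ (J + 1) := by
        rw [sum_add_distrib, ← sum_div]
        gcongr
        · rw [range_eq_Ico]
          exact (hgeom 0).trans_eq (by norm_num)
        · exact htail.trans (hgeom _)
    _ = _ := by ring

section DependsOn

variable {ι : Type*} {α : ι → Type*} {s : Set ι}

lemma dependsOn_mem_of_imp {A : Set (∀ i, α i)}
    (hA : ∀ ⦃x y : ∀ i, α i⦄, (∀ i ∈ s, x i = y i) → x ∈ A → y ∈ A) :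
    DependsOn (· ∈ A) s :=
  fun _ _ h => propext ⟨hA h, hA fun i hi => (h i hi).symm⟩

lemma dependsOn_mem_inter {A B : Set (∀ i, α i)} (hA : DependsOn (· ∈ A) s)
    (hB : DependsOn (· ∈ B) s) : DependsOn (· ∈ A ∩ B) s :=
  fun _ _ h => congrArg₂ And (hA h) (hB h)

lemma measurableSet_of_dependsOn {β : Type*} [MeasurableSpace β] [Countable β]
    [MeasurableSingletonClass β] [Finite s] {A : Set (ι → β)} (hA : DependsOn (· ∈ A) s) :
    MeasurableSet A := by
  let r : (ι → β) → (s → β) := fun x i => x i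
  have : A = r ⁻¹' (r '' A) := by
    refine (Set.subset_preimage_image _ _).antisymm ?_
    rintro x ⟨y, hy, heq⟩
    simpa [← hA fun i hi => congrFun heq ⟨i, hi⟩] using hy
  rw [this]
  exact (measurable_pi_lambda _ fun i => measurable_pi_apply _) (Set.to_countable _).measurableSet

end DependsOn

lemma dependsOn_mem_firstOne (n : ℕ) : DependsOn (· ∈ firstOne n) (Set.Iio n) :=
  dependsOn_mem_of_imp fun _ _ h ⟨j, hj, h1, h0⟩ =>
    ⟨j, hj, h j hj ▸ h1, fun k hk => h k (Set.mem_Iio.2 (hk.trans hj)) ▸ h0 k hk⟩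

lemma dependsOn_cdgS (n : ℕ) : DependsOn (cdgS n) (Set.Iio n) :=
  fun _ _ h => sum_congr rfl fun i hi => by rw [h i (by simpa using hi)]

lemma dependsOn_mem_typicalSet (n : ℕ) (ε : ℝ) : DependsOn (· ∈ typicalSet n ε) (Set.Iio n) :=
  fun ω ω' h => by
    simp only [typicalSet, Set.mem_ofPred_eq, adjOnes_eq_adjOnesBelow, dependsOn_cdgS n h]

def cyl (n : ℕ) (c : Fin n → Fin 3) : Set (ℕ → ℤ) := {ω | ∀ i < n, ω i = toSeq n c i}

lemma measurableSet_cyl (n : ℕ) (c : Fin n → Fin 3) : MeasurableSet (cyl n c) :=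
  measurableSet_of_dependsOn (s := Set.Iio n) <|
    dependsOn_mem_of_imp fun _ _ h hω i hi => (h i hi) ▸ hω i hi

lemma pairwise_disjoint_cyl (n : ℕ) : Pairwise (Function.onFun Disjoint (cyl n)) := by
  refine fun c c' hne => Set.disjoint_left.2 fun ω hc hc' => hne (funext fun i => ?_)
  rw [← toSeq_eq_iff, ← hc i i.2, hc' i i.2]

lemma mem_iff_toSeq_mem_of_mem_cyl {n : ℕ} {A : Set (ℕ → ℤ)}
    (hA : DependsOn (· ∈ A) (Set.Iio n)) {c : Fin n → Fin 3} {ω : ℕ → ℤ} (hω : ω ∈ cyl n c) :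
    ω ∈ A ↔ toSeq n c ∈ A :=
  Eq.to_iff (hA hω)

variable {μ : Measure (ℕ → ℤ)}

lemma _root_.IsCDGProductMeasure.isProbabilityMeasure (hμ : IsCDGProductMeasure μ) :
    IsProbabilityMeasure μ :=
  ⟨by simpa using hμ 0 0⟩

lemma _root_.IsCDGProductMeasure.measure_cyl (hμ : IsCDGProductMeasure μ) (n : ℕ)
    (c : Fin n → Fin 3) : μ (cyl n c) = (1 / 3) ^ n := by
  rw [cyl, hμ n, prod_congr rfl (g := fun _ => 1 / 3), prod_const, card_range]
  refine fun i hi => if_pos ?_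
  have := (c ⟨i, mem_range.1 hi⟩).2
  simp only [toSeq, dif_pos (mem_range.1 hi)]
  omega

open scoped Classical in
lemma _root_.IsCDGProductMeasure.measure_eq_cylCount (hμ : IsCDGProductMeasure μ) {n : ℕ}
    {A : Set (ℕ → ℤ)} (hA : DependsOn (· ∈ A) (Set.Iio n)) :
    μ A = cylCount n A * (1 / 3) ^ n := by
  have := hμ.isProbabilityMeasure
  have hdisj := pairwise_disjoint_cyl n
  have hcover : μ (⋃ c, cyl n c)ᶜ = 0 := by
    rw [measure_compl (MeasurableSet.iUnion (measurableSet_cyl n)) (measure_ne_top _ _),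
      measure_univ, measure_iUnion hdisj (measurableSet_cyl n), tsum_fintype]
    simp only [hμ.measure_cyl, sum_const, card_univ, Fintype.card_fun, Fintype.card_fin,
      nsmul_eq_mul, Nat.cast_pow, ← mul_pow]
    rw [one_div, Nat.cast_ofNat, ENNReal.mul_inv_cancel (by norm_num) (by norm_num), one_pow,
      tsub_self]
  have hA_eq : A ∩ ⋃ c, cyl n c = ⋃ c ∈ ({c | toSeq n c ∈ A} : Finset _), cyl n c := by
    ext ω
    simp only [Set.mem_inter_iff, Set.mem_iUnion, mem_filter, mem_univ, true_and, exists_prop]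
    exact ⟨fun ⟨hω, c, hc⟩ => ⟨c, (mem_iff_toSeq_mem_of_mem_cyl hA hc).1 hω, hc⟩,
      fun ⟨c, hcA, hc⟩ => ⟨(mem_iff_toSeq_mem_of_mem_cyl hA hc).2 hcA, c, hc⟩⟩
  rw [← measure_inter_conull hcover, hA_eq,
    measure_biUnion_finset (fun c _ c' _ hne => hdisj hne) fun c _ => measurableSet_cyl n c]
  simp [hμ.measure_cyl, cylCount]

open scoped Classical in
lemma cylCount_inter_add_cylCount_diff (n : ℕ) (A B : Set (ℕ → ℤ)) :
    cylCount n (A ∩ B) + cylCount n (A \ B) = cylCount n A := by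
  unfold cylCount
  rw [← card_filter_add_card_filter_not (s := {c | toSeq n c ∈ A}) (fun c => toSeq n c ∈ B),
    filter_filter, filter_filter]
  congr 2 <;> ext <;> simp

lemma _root_.IsCDGProductMeasure.cond_typicalSet (hμ : IsCDGProductMeasure μ) {n : ℕ}
    (hn : 1 ≤ n) (ε : ℝ) :
    μ[typicalSet n ε | firstOne n] = ENNReal.ofReal
      (1 - cylCount n (firstOne n \ typicalSet n ε) / cylCount n (firstOne n)) := by
  have hF := dependsOn_mem_firstOne n
  have hpos : (0 : ℝ) < cylCount n (firstOne n) := by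
    exact_mod_cast (pow_pos (by norm_num : 0 < 3) _).trans_le
      (three_pow_le_cylCount_firstOne hn)
  have hsplit : (1 : ℝ) - cylCount n (firstOne n \ typicalSet n ε) / cylCount n (firstOne n)
      = cylCount n (firstOne n ∩ typicalSet n ε) / cylCount n (firstOne n) := by
    rw [← cylCount_inter_add_cylCount_diff n (firstOne n) (typicalSet n ε)] at hpos ⊢
    field_simp
    push_cast
    ring
  rw [cond_apply (measurableSet_of_dependsOn hF), hμ.measure_eq_cylCount hF,
    hμ.measure_eq_cylCount (dependsOn_mem_inter hF (dependsOn_mem_typicalSet n ε)),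
    ← ENNReal.div_eq_inv_mul, ENNReal.mul_div_mul_right _ _ (by simp) (by simp), hsplit,
    ENNReal.ofReal_div_of_pos hpos, ENNReal.ofReal_natCast, ENNReal.ofReal_natCast]

end StandardForm

open StandardForm

/-- with `N(ω)` the number of `a ∈ {1,…,n−1}` with `b̃_{a-1} = 1` and `b̃_a = 1`, for every `ε > 0` the conditional probability `μ((4/18 − ε)n < N < (4/18 + ε)n ∣ F_n) → 1` as `n → ∞`. -/
theorem stmt_12 (μ : Measure (ℕ → ℤ)) (hμ : IsCDGProductMeasure μ) (ε : ℝ) (hε : 0 < ε) :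
    Tendsto (fun n : ℕ =>
      μ[|firstOne n] {ω : ℕ → ℤ |
        (4 / 18 - ε) * n <
          (((Finset.Ico 1 n).filter (fun a =>
            btilde n ω (a - 1) = 1 ∧ btilde n ω a = 1)).card : ℝ) ∧
        (((Finset.Ico 1 n).filter (fun a =>
            btilde n ω (a - 1) = 1 ∧ btilde n ω a = 1)).card : ℝ) <
          (4 / 18 + ε) * n})
      atTop (nhds 1) := by
  change Tendsto (fun n : ℕ => μ[typicalSet n ε | firstOne n]) atTop (nhds 1)
  have hεn : Tendsto (fun n : ℕ => ε * n) atTop atTop :=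
    tendsto_natCast_atTop_atTop.const_mul_atTop hε
  have hbound : Tendsto (fun n : ℕ => 3 / 2 * (1 / (ε ^ 2 * n) + (1 / 3 : ℝ) ^ (⌊ε * n⌋₊ + 1)))
      atTop (nhds 0) := by
    have h1 : Tendsto (fun n : ℕ => 1 / (ε ^ 2 * n)) atTop (nhds 0) :=
      tendsto_const_nhds.div_atTop (tendsto_natCast_atTop_atTop.const_mul_atTop (by positivity))
    have h2 : Tendsto (fun n : ℕ => (1 / 3 : ℝ) ^ (⌊ε * n⌋₊ + 1)) atTop (nhds 0) :=
      (tendsto_pow_atTop_nhds_zero_of_lt_one (by norm_num) (by norm_num)).comp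
        ((tendsto_add_atTop_nat 1).comp (tendsto_nat_floor_atTop.comp hεn))
    simpa using (h1.add h2).const_mul (3 / 2)
  have hbad : Tendsto (fun n => (cylCount n (firstOne n \ typicalSet n ε) : ℝ)
      / cylCount n (firstOne n)) atTop (nhds 0) :=
    squeeze_zero' (Eventually.of_forall fun n => by positivity)
      ((hεn.eventually_ge_atTop 2).mono fun n hn => cylCount_diff_typicalSet_div_le hε hn) hbound
  have hlim := ENNReal.tendsto_ofReal (tendsto_const_nhds (x := (1 : ℝ)).sub hbad)
  rw [sub_zero, ENNReal.ofReal_one] at hlim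
  exact hlim.congr' ((eventually_ge_atTop 1).mono fun n hn => (hμ.cond_typicalSet hn ε).symm)
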